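/- Best tubal-rank-r approximation via truncated t-SVD in the Fourier domain reduces to blockwise best rank-r approximation: for T ∈ ℝ^{m×n×k} with t-SVD T = U * Θ * V†, the truncation T_r = Σ_{s=1}^r U(:,s,:) * Θ(s,s,:) * V(:,s,:)† satisfies ‖T − T_r‖_F² = (1/k) Σ_{ℓ=1}^{k} ‖T̃^{(ℓ)} − (T̃_r)^{(ℓ)}‖_F², where T̃^{(ℓ)} are the frontal slices of the DFT of T along mode 3 and each (T̃_r)^{(ℓ)} is the best rank-r approximation (truncated matrix SVD) of T̃^{(ℓ)}. -/

import Mathlib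

open scoped BigOperators Matrix

/-- Circular convolution of two length-`k` tubes. -/
def tubeConv {k : ℕ} [NeZero k] (a b : ZMod k → ℝ) : ZMod k → ℝ :=
  fun i => ∑ s : ZMod k, a s * b (i - s)

/-- Squared Frobenius norm of a real third-order tensor. -/
def frobSq {k m n : ℕ} [NeZero k] (T : Fin m → Fin n → ZMod k → ℝ) : ℝ :=
  ∑ i : Fin m, ∑ j : Fin n, ∑ t : ZMod k, (T i j t) ^ 2

/-- Squared Frobenius norm of a complex matrix. -/
noncomputable def frobSqC {α β : Type*} [Fintype α] [Fintype β] (M : Matrix α β ℂ) : ℝ :=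
  ∑ i : α, ∑ j : β, ‖M i j‖ ^ 2

/-- The `ℓ`-th frontal slice of the (unnormalized) DFT of a tensor along the
third mode, with `ω = exp(-2πi/k)`. -/
noncomputable def dftSlice {k m n : ℕ} [NeZero k] (T : Fin m → Fin n → ZMod k → ℝ)
    (ℓ : ZMod k) : Matrix (Fin m) (Fin n) ℂ :=
  Matrix.of fun i j =>
    ∑ t : ZMod k, (T i j t : ℂ) * Complex.exp (-2 * Real.pi * Complex.I / k) ^ (t.val * ℓ.val)

/-- The tubal-rank-`r` truncation `T_r = Σ_{s=1}^r U(:,s,:) * Θ(s,s,:) * V(:,s,:)†`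
of a t-SVD `T = U * Θ * V†`. -/
def truncTSVD {k m n : ℕ} [NeZero k] (r : ℕ) (hrm : r ≤ m) (hrn : r ≤ n)
    (U : Fin m → Fin m → ZMod k → ℝ) (Θ : Fin m → Fin n → ZMod k → ℝ)
    (V : Fin n → Fin n → ZMod k → ℝ) : Fin m → Fin n → ZMod k → ℝ :=
  fun i j t =>
    ∑ s : Fin r,
      tubeConv
        (tubeConv (fun u => U i (Fin.castLE hrm s) u)
          (fun u => Θ (Fin.castLE hrm s) (Fin.castLE hrn s) u))
        (fun u => V j (Fin.castLE hrn s) (-u)) t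

/-!
By Parseval's identity for the DFT along the third mode, `‖A‖_F² = (1/k) Σ_ℓ ‖Ã⁽ℓ⁾‖_F²`; applied
to `A = T - T_r`, with the DFT linear, this is the first claim. For the second, the convolution
theorem shows that the `ℓ`-th slice of `T_r` is `Û Θ̃_r V̂ᴴ`, where `Θ̃_r` keeps the first `r`
columns of the f-diagonal `Θ̃`. Unitary invariance of the Frobenius norm reduces optimality to
`‖Θ̃ - Θ̃_r‖ ≤ ‖Θ̃ - N‖` for `rank N ≤ r`.

That is Eckart–Young for a matrix whose columns `x_j` are orthogonal with decreasing norms. Let `K`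
be the column space of `N` and `d_j = ‖P_K x_j‖² / ‖x_j‖²` (`0` when `x_j = 0`). Then
`‖x_j - y_j‖² ≥ ‖x_j‖² (1 - d_j)` for every `y_j ∈ K`, each `d_j` lies in `[0, 1]`, and by Bessel's
inequality the `d_j` sum to at most `dim K ≤ r`. Under these constraints `Σ_j ‖x_j‖² (1 - d_j)` is
smallest when `d` puts weight `1` on the `r` largest columns, where it equals `Σ_{j ≥ r} ‖x_j‖²`.
-/

open Finset Matrix
open scoped ZMod ComplexConjugate

namespace ZMod

variable {N : ℕ} [NeZero N]

lemma stdAddChar_neg_mul (t ℓ : ZMod N) :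
    stdAddChar (-(t * ℓ)) = Complex.exp (-2 * Real.pi * Complex.I / N) ^ (t.val * ℓ.val) := by
  have h : -(t * ℓ) = (t.val * ℓ.val) • ((-1 : ℤ) : ZMod N) := by
    simp [nsmul_eq_mul, ZMod.natCast_val, ZMod.cast_id]
  rw [h, AddChar.map_nsmul_eq_pow, stdAddChar_coe]
  congr 2
  push_cast
  ring

lemma stdAddChar_mul_conj (j j' k : ZMod N) :
    stdAddChar (-(j * k)) * conj (stdAddChar (-(j' * k))) = stdAddChar (k * (j' - j)) := by
  rw [← AddChar.map_neg_eq_conj, ← AddChar.map_add_eq_mul]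
  ring_nf

lemma sum_stdAddChar_mul_conj (j j' : ZMod N) :
    ∑ k, stdAddChar (-(j * k)) * conj (stdAddChar (-(j' * k))) =
      if j = j' then (N : ℂ) else 0 := by
  simp_rw [stdAddChar_mul_conj, AddChar.sum_mulShift _ (isPrimitive_stdAddChar N), sub_eq_zero,
    eq_comm (a := j'), ZMod.card]
  push_cast
  rfl

lemma sum_norm_sq_dft (Φ : ZMod N → ℂ) : ∑ k, ‖𝓕 Φ k‖ ^ 2 = N * ∑ j, ‖Φ j‖ ^ 2 := by
  apply Complex.ofReal_injective
  push_cast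
  simp_rw [← Complex.mul_conj', dft_apply, smul_eq_mul, map_sum, map_mul, sum_mul_sum]
  rw [sum_comm]
  calc _ = ∑ j, ∑ j', Φ j * conj (Φ j') *
        ∑ k, stdAddChar (-(j * k)) * conj (stdAddChar (-(j' * k))) := by
        refine sum_congr rfl fun j _ => ?_
        rw [sum_comm]
        refine sum_congr rfl fun j' _ => ?_
        rw [mul_sum]
        exact sum_congr rfl fun k _ => by ring
    _ = _ := by
        simp_rw [sum_stdAddChar_mul_conj, mul_ite, mul_zero, sum_ite_eq, mem_univ, if_true,
          mul_sum]
        exact sum_congr rfl fun j _ => by ring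

lemma dft_conv (Φ Ψ : ZMod N → ℂ) (k : ZMod N) :
    𝓕 (fun i => ∑ s, Φ s * Ψ (i - s)) k = 𝓕 Φ k * 𝓕 Ψ k := by
  simp_rw [dft_apply, smul_eq_mul, sum_mul_sum, mul_sum]
  rw [sum_comm]
  refine sum_congr rfl fun s _ => Fintype.sum_equiv (Equiv.subRight s) _ _ fun i => ?_
  rw [Equiv.subRight_apply, show -(i * k) = -(s * k) + -((i - s) * k) by ring,
    AddChar.map_add_eq_mul]
  ring

lemma dft_sum_apply {ι : Type*} (s : Finset ι) (Φ : ι → ZMod N → ℂ) (k : ZMod N) :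
    𝓕 (fun j => ∑ i ∈ s, Φ i j) k = ∑ i ∈ s, 𝓕 (Φ i) k := by
  simp only [dft_apply, smul_sum]
  exact sum_comm

lemma dft_conj_comp_neg (Φ : ZMod N → ℂ) (k : ZMod N) :
    𝓕 (fun j => conj (Φ (-j))) k = conj (𝓕 Φ k) := by
  rw [dft_apply, dft_apply, map_sum]
  refine Fintype.sum_equiv (Equiv.neg _) _ _ fun j => ?_
  simp [AddChar.map_neg_eq_conj]

end ZMod

/-- The slack is `Σ_j (w j - c) * ([p j] - d j) + c * (#{j | p j} - Σ_j d j)`, a sum of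
nonnegative terms. -/
lemma sum_filter_not_le_sum_mul_one_sub {ι : Type*} [Fintype ι] (p : ι → Prop) [DecidablePred p]
    {w d : ι → ℝ} {c : ℝ} (hc : 0 ≤ c) (hwp : ∀ j, p j → c ≤ w j) (hwnp : ∀ j, ¬ p j → w j ≤ c)
    (hd0 : ∀ j, 0 ≤ d j) (hd1 : ∀ j, d j ≤ 1) (hsum : ∑ j, d j ≤ #{j | p j}) :
    ∑ j with ¬ p j, w j ≤ ∑ j, w j * (1 - d j) := by
  have hterm : ∀ j, (if p j then 0 else w j) + c * ((if p j then 1 else 0) - d j) ≤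
      w j * (1 - d j) := by
    intro j
    by_cases hj : p j
    · simp only [hj, if_true]
      nlinarith [hwp j hj, hd1 j]
    · simp only [hj, if_false]
      nlinarith [hwnp j hj, hd0 j]
  calc ∑ j with ¬ p j, w j
      ≤ ∑ j with ¬ p j, w j + c * (#{j | p j} - ∑ j, d j) := by
        nlinarith [mul_nonneg hc (sub_nonneg.mpr hsum)]
    _ = ∑ j, ((if p j then 0 else w j) + c * ((if p j then 1 else 0) - d j)) := by
        rw [sum_add_distrib, ← mul_sum, sum_sub_distrib, natCast_card_filter, sum_filter,
          sum_congr rfl]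
        intro j _
        split_ifs <;> rfl
    _ ≤ ∑ j, w j * (1 - d j) := sum_le_sum fun j _ => hterm j

lemma Antitone.sum_filter_le_sum_mul_one_sub {n r : ℕ} {w d : Fin n → ℝ} (hw : Antitone w)
    (hw0 : ∀ j, 0 ≤ w j) (hd0 : ∀ j, 0 ≤ d j) (hd1 : ∀ j, d j ≤ 1) (hsum : ∑ j, d j ≤ r) :
    ∑ j : Fin n with r ≤ j.val, w j ≤ ∑ j, w j * (1 - d j) := by
  set c : ℝ := if h : r < n then w ⟨r, h⟩ else 0
  have hc : 0 ≤ c := by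
    simp only [c]
    split_ifs
    exacts [hw0 _, le_rfl]
  have hwp : ∀ j : Fin n, j.val < r → c ≤ w j := by
    intro j hj
    simp only [c]
    split_ifs
    exacts [hw (Fin.mk_le_mk.mpr hj.le), hw0 j]
  have hwnp : ∀ j : Fin n, ¬ j.val < r → w j ≤ c := fun j hj => by
    simp only [c, dif_pos (show r < n by omega)]
    exact hw (Fin.mk_le_mk.mpr (not_lt.mp hj))
  have hcard : ∑ j, d j ≤ #{j : Fin n | j.val < r} := by
    rw [Fin.card_filter_val_lt, Nat.cast_min]
    exact le_min (by simpa using sum_le_sum fun j (_ : j ∈ univ) => hd1 j) hsum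
  simpa only [not_lt] using sum_filter_not_le_sum_mul_one_sub _ hc hwp hwnp hd0 hd1 hcard

section LowRank

variable {𝕜 E : Type*} [RCLike 𝕜] [NormedAddCommGroup E] [InnerProductSpace 𝕜 E]

lemma Submodule.norm_sq_sub_norm_sq_orthogonalProjectionOnto_le (K : Submodule 𝕜 E)
    [K.HasOrthogonalProjection] (x : E) {y : E} (hy : y ∈ K) :
    ‖x‖ ^ 2 - ‖K.orthogonalProjectionOnto x‖ ^ 2 ≤ ‖x - y‖ ^ 2 := by
  have hx := norm_sq_eq_add_norm_sq_projection x K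
  have hxy := norm_sq_eq_add_norm_sq_projection (x - y) K
  rw [map_sub Kᗮ.orthogonalProjectionOnto, orthogonalProjectionOnto_apply_of_mem_orthogonal
    (K.le_orthogonal_orthogonal hy), sub_zero] at hxy
  nlinarith [sq_nonneg ‖K.orthogonalProjectionOnto (x - y)‖]

lemma Orthonormal.sum_norm_sq_orthogonalProjectionOnto_le_finrank {ι : Type*} [Fintype ι]
    {v : ι → E} (hv : Orthonormal 𝕜 v) (K : Submodule 𝕜 E) [FiniteDimensional 𝕜 K] :
    ∑ i, ‖K.orthogonalProjectionOnto (v i)‖ ^ 2 ≤ Module.finrank 𝕜 K := by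
  let b := stdOrthonormalBasis 𝕜 K
  calc ∑ i, ‖K.orthogonalProjectionOnto (v i)‖ ^ 2
      = ∑ α, ∑ i, ‖inner 𝕜 (v i) (b α : E)‖ ^ 2 := by
        simp_rw [← b.sum_sq_norm_inner_right,
          Submodule.inner_orthogonalProjectionOnto_eq_of_mem_left]
        rw [sum_comm]
        simp_rw [← inner_conj_symm (b _ : E), RCLike.norm_conj]
    _ ≤ ∑ α, ‖(b α : E)‖ ^ 2 := sum_le_sum fun α _ => hv.sum_inner_products_le _
    _ = Module.finrank 𝕜 K := by simp [show ∀ α, ‖(b α : E)‖ = 1 from b.orthonormal.1]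

lemma sum_norm_sq_orthogonalProjectionOnto_div_le_finrank {ι : Type*} [Fintype ι] {x : ι → E}
    (hx : Pairwise fun i j => inner 𝕜 (x i) (x j) = 0) (K : Submodule 𝕜 E)
    [FiniteDimensional 𝕜 K] :
    ∑ i, ‖K.orthogonalProjectionOnto (x i)‖ ^ 2 / ‖x i‖ ^ 2 ≤ Module.finrank 𝕜 K := by
  classical
  let s : Finset ι := {i | x i ≠ 0}
  let u : s → E := fun i => (‖x i‖⁻¹ : 𝕜) • x i
  have hu : Orthonormal 𝕜 u := by
    refine ⟨fun i => norm_smul_inv_norm (mem_filter.mp i.2).2, fun i j hij => ?_⟩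
    simp only [u, inner_smul_left, inner_smul_right, hx (Subtype.coe_injective.ne hij), mul_zero]
  calc ∑ i, ‖K.orthogonalProjectionOnto (x i)‖ ^ 2 / ‖x i‖ ^ 2
      = ∑ i : s, ‖K.orthogonalProjectionOnto (u i)‖ ^ 2 := by
        rw [← sum_filter_of_ne (p := fun i => x i ≠ 0) (fun i _ h hi => by simp [hi] at h),
          ← sum_coe_sort]
        refine sum_congr rfl fun i _ => ?_
        simp only [u, map_smul, norm_smul, norm_inv, RCLike.norm_ofReal, abs_norm]
        ring
    _ ≤ Module.finrank 𝕜 K := hu.sum_norm_sq_orthogonalProjectionOnto_le_finrank K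

theorem sum_norm_sq_filter_le_sum_norm_sq_sub {n r : ℕ} {x y : Fin n → E}
    (hx : Pairwise fun i j => inner 𝕜 (x i) (x j) = 0) (hx_anti : Antitone fun j => ‖x j‖)
    (hy : Module.finrank 𝕜 (Submodule.span 𝕜 (Set.range y)) ≤ r) :
    ∑ j : Fin n with r ≤ j.val, ‖x j‖ ^ 2 ≤ ∑ j, ‖x j - y j‖ ^ 2 := by
  set K := Submodule.span 𝕜 (Set.range y)
  have : FiniteDimensional 𝕜 K := FiniteDimensional.span_of_finite 𝕜 (Set.finite_range y)
  set d : Fin n → ℝ := fun j => ‖K.orthogonalProjectionOnto (x j)‖ ^ 2 / ‖x j‖ ^ 2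
  have hd1 : ∀ j, d j ≤ 1 := fun j => div_le_one_of_le₀
    (pow_le_pow_left₀ (norm_nonneg _) (K.norm_orthogonalProjectionOnto_apply_le _) 2) (sq_nonneg _)
  have hcol : ∀ j, ‖x j‖ ^ 2 * (1 - d j) ≤ ‖x j - y j‖ ^ 2 := by
    intro j
    by_cases hxj : x j = 0
    · rw [hxj, norm_zero, zero_pow two_ne_zero, zero_mul]
      positivity
    · have : ‖x j‖ ^ 2 * (1 - d j) = ‖x j‖ ^ 2 - ‖K.orthogonalProjectionOnto (x j)‖ ^ 2 := by
        have := norm_ne_zero_iff.mpr hxj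
        simp only [d]
        field_simp
      rw [this]
      exact K.norm_sq_sub_norm_sq_orthogonalProjectionOnto_le _ (Submodule.subset_span ⟨j, rfl⟩)
  calc ∑ j : Fin n with r ≤ j.val, ‖x j‖ ^ 2
      ≤ ∑ j, ‖x j‖ ^ 2 * (1 - d j) :=
        Antitone.sum_filter_le_sum_mul_one_sub
          (fun i j hij => pow_le_pow_left₀ (norm_nonneg _) (hx_anti hij) 2)
          (fun j => by positivity) (fun j => by positivity) hd1
          ((sum_norm_sq_orthogonalProjectionOnto_div_le_finrank hx K).trans (mod_cast hy))
    _ ≤ ∑ j, ‖x j - y j‖ ^ 2 := sum_le_sum fun j _ => hcol j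

end LowRank

namespace Matrix

def truncCols {α R : Type*} [Zero R] {n : ℕ} (r : ℕ) (M : Matrix α (Fin n) R) :
    Matrix α (Fin n) R :=
  of fun i j => if (j : ℕ) < r then M i j else 0

lemma mul_truncCols {l α R : Type*} [Fintype α] [NonUnitalNonAssocSemiring R] {n r : ℕ}
    (A : Matrix l α R) (M : Matrix α (Fin n) R) : A * truncCols r M = truncCols r (A * M) := by
  ext i j
  by_cases hj : (j : ℕ) < r <;> simp [truncCols, mul_apply, hj]

lemma truncCols_mul_apply {α β R : Type*} [NonUnitalNonAssocSemiring R] {n r : ℕ} (hrn : r ≤ n)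
    (M : Matrix α (Fin n) R) (N : Matrix (Fin n) β R) (i : α) (j : β) :
    (truncCols r M * N) i j = ∑ s : Fin r, M i (Fin.castLE hrn s) * N (Fin.castLE hrn s) j := by
  have hrange : ({q : Fin n | (q : ℕ) < r} : Finset (Fin n)) = univ.map (Fin.castLEEmb hrn) := by
    ext q
    simp only [mem_filter, mem_univ, true_and, mem_map, Fin.castLEEmb_apply]
    exact ⟨fun h => ⟨⟨q, h⟩, rfl⟩, by rintro ⟨s, -, rfl⟩; exact s.isLt⟩
  simp only [mul_apply, truncCols, of_apply, ite_mul, zero_mul]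
  rw [← sum_filter, hrange, sum_map]
  rfl

def euclideanCol {α β 𝕜 : Type*} (M : Matrix α β 𝕜) (j : β) : EuclideanSpace 𝕜 α :=
  WithLp.toLp 2 fun i => M i j

lemma euclideanCol_sub {α β 𝕜 : Type*} [AddCommGroup 𝕜] (M N : Matrix α β 𝕜) (j : β) :
    (M - N).euclideanCol j = M.euclideanCol j - N.euclideanCol j :=
  rfl

section OffDiagonal

variable {𝕜 : Type*} [RCLike 𝕜] {m n : ℕ} {S : Matrix (Fin m) (Fin n) 𝕜}
  (hS : ∀ (i : Fin m) (j : Fin n), (i : ℕ) ≠ j → S i j = 0)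
include hS

lemma pairwise_inner_euclideanCol_eq_zero :
    Pairwise fun j j' => inner 𝕜 (S.euclideanCol j) (S.euclideanCol j') = 0 := by
  intro j j' hjj'
  refine sum_eq_zero fun i _ => ?_
  by_cases hij : (i : ℕ) = j
  · simp [euclideanCol, hS i j' (hij ▸ Fin.val_ne_of_ne hjj')]
  · simp [euclideanCol, hS i j hij]

lemma norm_euclideanCol_of_lt (j : Fin n) (hj : (j : ℕ) < m) :
    ‖S.euclideanCol j‖ = ‖S ⟨j, hj⟩ j‖ := by
  rw [euclideanCol, EuclideanSpace.norm_eq, Fintype.sum_eq_single ⟨j, hj⟩,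
    Real.sqrt_sq (norm_nonneg _)]
  intro i hi
  simp [hS i j fun h => hi (Fin.ext h)]

lemma euclideanCol_eq_zero_of_le (j : Fin n) (hj : m ≤ (j : ℕ)) : S.euclideanCol j = 0 := by
  ext i
  exact hS i j (by omega)

lemma antitone_norm_euclideanCol
    (hord : ∀ (i i' : Fin m) (j j' : Fin n),
      (i : ℕ) = (j : ℕ) → (i' : ℕ) = (j' : ℕ) → (i : ℕ) ≤ (i' : ℕ) → ‖S i' j'‖ ≤ ‖S i j‖) :
    Antitone fun j => ‖S.euclideanCol j‖ := by
  intro j j' hjj'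
  by_cases hj' : (j' : ℕ) < m
  · have hj : (j : ℕ) < m := lt_of_le_of_lt hjj' hj'
    simp only [norm_euclideanCol_of_lt hS _ hj, norm_euclideanCol_of_lt hS _ hj']
    exact hord _ _ _ _ rfl rfl hjj'
  · simp only [euclideanCol_eq_zero_of_le hS j' (not_lt.mp hj'), norm_zero, norm_nonneg]

end OffDiagonal

end Matrix

section Frobenius

variable {α β : Type*} [Fintype α] [Fintype β]

lemma frobSqC_eq_sum_norm_sq_euclideanCol (M : Matrix α β ℂ) :
    frobSqC M = ∑ j, ‖M.euclideanCol j‖ ^ 2 := by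
  rw [frobSqC, sum_comm]
  simp [EuclideanSpace.norm_sq_eq, euclideanCol]

lemma ofReal_frobSqC [DecidableEq β] (M : Matrix α β ℂ) : (frobSqC M : ℂ) = (Mᴴ * M).trace := by
  rw [frobSqC, sum_comm]
  simp [trace, mul_apply, Complex.conj_mul']

variable [DecidableEq α] [DecidableEq β] {U : Matrix α α ℂ} {V : Matrix β β ℂ}

lemma frobSqC_mul_mul_conjTranspose (hU : Uᴴ * U = 1) (hV : Vᴴ * V = 1) (X : Matrix α β ℂ) :
    frobSqC (U * X * Vᴴ) = frobSqC X := by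
  apply Complex.ofReal_injective
  rw [ofReal_frobSqC, ofReal_frobSqC, conjTranspose_mul, conjTranspose_mul,
    conjTranspose_conjTranspose]
  calc (V * (Xᴴ * Uᴴ) * (U * X * Vᴴ)).trace = (V * (Xᴴ * X) * Vᴴ).trace := by
        simp only [Matrix.mul_assoc, ← Matrix.mul_assoc Uᴴ, hU, Matrix.one_mul]
    _ = (Xᴴ * X).trace := by rw [trace_mul_cycle, hV, Matrix.one_mul]

lemma frobSqC_mul_mul_conjTranspose_sub (hU : Uᴴ * U = 1) (hV : Vᴴ * V = 1)
    (X B : Matrix α β ℂ) : frobSqC (U * X * Vᴴ - B) = frobSqC (X - Uᴴ * B * V) := by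
  have hB : U * (Uᴴ * B * V) * Vᴴ = B := by
    simp only [← Matrix.mul_assoc, mul_eq_one_comm.mp hU, Matrix.one_mul]
    rw [Matrix.mul_assoc, mul_eq_one_comm.mp hV, Matrix.mul_one]
  rw [← frobSqC_mul_mul_conjTranspose hU hV (X - _), Matrix.mul_sub, Matrix.sub_mul, hB]

end Frobenius

section EckartYoung

variable {m n r : ℕ}

lemma frobSqC_sub_truncCols (M : Matrix (Fin m) (Fin n) ℂ) :
    frobSqC (M - truncCols r M) = ∑ j : Fin n with r ≤ j.val, ‖M.euclideanCol j‖ ^ 2 := by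
  rw [frobSqC_eq_sum_norm_sq_euclideanCol, sum_filter]
  refine sum_congr rfl fun j _ => ?_
  by_cases hj : r ≤ (j : ℕ)
  · simp [truncCols, euclideanCol, hj, not_lt.mpr hj]
  · simp [truncCols, euclideanCol, hj, not_le.mp hj, ← Pi.zero_def]

lemma finrank_span_range_euclideanCol (N : Matrix (Fin m) (Fin n) ℂ) :
    Module.finrank ℂ (Submodule.span ℂ (Set.range N.euclideanCol)) = N.rank := by
  rw [rank_eq_finrank_span_cols,
    ← LinearEquiv.finrank_map_eq (WithLp.linearEquiv 2 ℂ (Fin m → ℂ)).symm, Submodule.map_span,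
    ← Set.range_comp]
  rfl

theorem frobSqC_sub_truncCols_le_of_orthogonal_cols {S N : Matrix (Fin m) (Fin n) ℂ}
    (hS : Pairwise fun j j' => inner ℂ (S.euclideanCol j) (S.euclideanCol j') = 0)
    (hS_anti : Antitone fun j => ‖S.euclideanCol j‖) (hN : N.rank ≤ r) :
    frobSqC (S - truncCols r S) ≤ frobSqC (S - N) := by
  rw [frobSqC_sub_truncCols, frobSqC_eq_sum_norm_sq_euclideanCol]
  simp_rw [euclideanCol_sub]
  exact sum_norm_sq_filter_le_sum_norm_sq_sub hS hS_anti
    ((finrank_span_range_euclideanCol N).trans_le hN)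

end EckartYoung

section Tensor

variable {k m n : ℕ} [NeZero k]

lemma dftSlice_apply (T : Fin m → Fin n → ZMod k → ℝ) (ℓ : ZMod k) (i : Fin m) (j : Fin n) :
    dftSlice T ℓ i j = 𝓕 (fun t => (T i j t : ℂ)) ℓ := by
  simp [dftSlice, ZMod.dft_apply, ZMod.stdAddChar_neg_mul, mul_comm]

lemma dftSlice_sub (S T : Fin m → Fin n → ZMod k → ℝ) (ℓ : ZMod k) :
    dftSlice (fun i j t => S i j t - T i j t) ℓ = dftSlice S ℓ - dftSlice T ℓ := by
  ext i j
  simp only [dftSlice_apply, Matrix.sub_apply, Complex.ofReal_sub]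
  exact congr_fun (map_sub 𝓕 (fun t => (S i j t : ℂ)) (fun t => (T i j t : ℂ))) ℓ

lemma frobSq_eq_inv_mul_sum_frobSqC_dftSlice (T : Fin m → Fin n → ZMod k → ℝ) :
    frobSq T = (1 / (k : ℝ)) * ∑ ℓ : ZMod k, frobSqC (dftSlice T ℓ) := by
  have hk : (k : ℝ) ≠ 0 := NeZero.ne _
  simp_rw [frobSqC, dftSlice_apply]
  rw [sum_comm]
  simp_rw [sum_comm (γ := ZMod k), ZMod.sum_norm_sq_dft, Complex.norm_real, Real.norm_eq_abs,
    sq_abs, ← mul_sum]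
  field_simp
  rfl

lemma dft_tubeConv (a b : ZMod k → ℝ) (ℓ : ZMod k) :
    𝓕 (fun t => (tubeConv a b t : ℂ)) ℓ = 𝓕 (fun t => (a t : ℂ)) ℓ * 𝓕 (fun t => (b t : ℂ)) ℓ := by
  simpa [tubeConv] using ZMod.dft_conv (fun t => (a t : ℂ)) (fun t => (b t : ℂ)) ℓ

lemma dftSlice_truncTSVD {r : ℕ} (hrm : r ≤ m) (hrn : r ≤ n)
    (U : Fin m → Fin m → ZMod k → ℝ) (Θ : Fin m → Fin n → ZMod k → ℝ)
    (V : Fin n → Fin n → ZMod k → ℝ) (ℓ : ZMod k)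
    (hΘ : ∀ (i : Fin m) (j : Fin n), (i : ℕ) ≠ j → dftSlice Θ ℓ i j = 0) :
    dftSlice (truncTSVD r hrm hrn U Θ V) ℓ =
      dftSlice U ℓ * truncCols r (dftSlice Θ ℓ) * (dftSlice V ℓ)ᴴ := by
  ext i j
  rw [mul_truncCols, truncCols_mul_apply hrn, dftSlice_apply]
  simp only [truncTSVD, Complex.ofReal_sum, ZMod.dft_sum_apply, dft_tubeConv]
  refine sum_congr rfl fun s _ => ?_
  have hV : 𝓕 (fun t => (V j (Fin.castLE hrn s) (-t) : ℂ)) ℓ =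
      star (dftSlice V ℓ j (Fin.castLE hrn s)) := by
    simpa [dftSlice_apply] using
      ZMod.dft_conj_comp_neg (fun t => (V j (Fin.castLE hrn s) t : ℂ)) ℓ
  rw [hV, mul_apply, Fintype.sum_eq_single (Fin.castLE hrm s) fun p hp => by
    rw [hΘ p _ fun h => hp (Fin.ext h), mul_zero], conjTranspose_apply]
  simp only [dftSlice_apply]

end Tensor

theorem truncTSVD_best_rank_approx_general {k m n r : ℕ} [NeZero k]
    (hrm : r ≤ m) (hrn : r ≤ n)
    (T : Fin m → Fin n → ZMod k → ℝ)
    (U : Fin m → Fin m → ZMod k → ℝ) (Θ : Fin m → Fin n → ZMod k → ℝ)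
    (V : Fin n → Fin n → ZMod k → ℝ)
    (hfac : ∀ ℓ : ZMod k, dftSlice T ℓ = dftSlice U ℓ * dftSlice Θ ℓ * (dftSlice V ℓ)ᴴ)
    (hUu : ∀ ℓ : ZMod k, (dftSlice U ℓ)ᴴ * dftSlice U ℓ = 1)
    (hVu : ∀ ℓ : ZMod k, (dftSlice V ℓ)ᴴ * dftSlice V ℓ = 1)
    (hdiag : ∀ (i : Fin m) (j : Fin n) (t : ZMod k), (i : ℕ) ≠ (j : ℕ) → Θ i j t = 0)
    (hord : ∀ (ℓ : ZMod k) (i i' : Fin m) (j j' : Fin n),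
      (i : ℕ) = (j : ℕ) → (i' : ℕ) = (j' : ℕ) → (i : ℕ) ≤ (i' : ℕ) →
      ‖dftSlice Θ ℓ i' j'‖ ≤ ‖dftSlice Θ ℓ i j‖) :
    frobSq (fun i j t => T i j t - truncTSVD r hrm hrn U Θ V i j t) =
      (1 / (k : ℝ)) *
        ∑ ℓ : ZMod k, frobSqC (dftSlice T ℓ - dftSlice (truncTSVD r hrm hrn U Θ V) ℓ) ∧
    ∀ (ℓ : ZMod k) (B : Matrix (Fin m) (Fin n) ℂ), B.rank ≤ r →
      frobSqC (dftSlice T ℓ - dftSlice (truncTSVD r hrm hrn U Θ V) ℓ) ≤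
        frobSqC (dftSlice T ℓ - B) := by
  refine ⟨by simp_rw [frobSq_eq_inv_mul_sum_frobSqC_dftSlice, dftSlice_sub], fun ℓ B hB => ?_⟩
  have hΘ : ∀ (i : Fin m) (j : Fin n), (i : ℕ) ≠ j → dftSlice Θ ℓ i j = 0 := fun i j hij => by
    simp [dftSlice_apply, hdiag i j _ hij, ← Pi.zero_def]
  rw [dftSlice_truncTSVD hrm hrn U Θ V ℓ hΘ, hfac ℓ, ← Matrix.sub_mul, ← Matrix.mul_sub,
    frobSqC_mul_mul_conjTranspose (hUu ℓ) (hVu ℓ),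
    frobSqC_mul_mul_conjTranspose_sub (hUu ℓ) (hVu ℓ)]
  exact frobSqC_sub_truncCols_le_of_orthogonal_cols (pairwise_inner_euclideanCol_eq_zero hΘ)
    (antitone_norm_euclideanCol hΘ (hord ℓ))
    ((rank_mul_le_left _ _).trans ((rank_mul_le_right _ _).trans hB))

/-- Best tubal-rank-`r` approximation via truncated t-SVD reduces, in the
Fourier domain, to blockwise best rank-`r` approximation: if `T = U * Θ * V†`
is a t-SVD (in the Fourier domain, each frontal slice factorizes with unitary
factors and a nonnegative, decreasingly ordered f-diagonal middle factor),
then for `T_r` the truncated t-SVD we have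
`‖T − T_r‖_F² = (1/k) Σ_ℓ ‖T̃⁽ℓ⁾ − (T̃_r)⁽ℓ⁾‖_F²`, and each `(T̃_r)⁽ℓ⁾` is a
best rank-`r` approximation of `T̃⁽ℓ⁾` in Frobenius norm. -/
theorem truncTSVD_best_rank_approx {k m n r : ℕ} [NeZero k]
    (hrm : r ≤ m) (hrn : r ≤ n)
    (T : Fin m → Fin n → ZMod k → ℝ)
    (U : Fin m → Fin m → ZMod k → ℝ) (Θ : Fin m → Fin n → ZMod k → ℝ)
    (V : Fin n → Fin n → ZMod k → ℝ)
    (hfac : ∀ ℓ : ZMod k, dftSlice T ℓ = dftSlice U ℓ * dftSlice Θ ℓ * (dftSlice V ℓ)ᴴ)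
    (hUu : ∀ ℓ : ZMod k, (dftSlice U ℓ)ᴴ * dftSlice U ℓ = 1)
    (hVu : ∀ ℓ : ZMod k, (dftSlice V ℓ)ᴴ * dftSlice V ℓ = 1)
    (hdiag : ∀ (i : Fin m) (j : Fin n) (t : ZMod k), (i : ℕ) ≠ (j : ℕ) → Θ i j t = 0)
    (hpos : ∀ (ℓ : ZMod k) (i : Fin m) (j : Fin n), (i : ℕ) = (j : ℕ) →
      ∃ c : ℝ, 0 ≤ c ∧ dftSlice Θ ℓ i j = (c : ℂ))
    (hord : ∀ (ℓ : ZMod k) (i i' : Fin m) (j j' : Fin n),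
      (i : ℕ) = (j : ℕ) → (i' : ℕ) = (j' : ℕ) → (i : ℕ) ≤ (i' : ℕ) →
      ‖dftSlice Θ ℓ i' j'‖ ≤ ‖dftSlice Θ ℓ i j‖) :
    frobSq (fun i j t => T i j t - truncTSVD r hrm hrn U Θ V i j t) =
      (1 / (k : ℝ)) *
        ∑ ℓ : ZMod k, frobSqC (dftSlice T ℓ - dftSlice (truncTSVD r hrm hrn U Θ V) ℓ) ∧
    ∀ (ℓ : ZMod k) (B : Matrix (Fin m) (Fin n) ℂ), B.rank ≤ r →
      frobSqC (dftSlice T ℓ - dftSlice (truncTSVD r hrm hrn U Θ V) ℓ) ≤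
        frobSqC (dftSlice T ℓ - B) :=
  truncTSVD_best_rank_approx_general hrm hrn T U Θ V hfac hUu hVu hdiag hord
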